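/- Let P = [a]×[b] and fix 1 ≤ i ≤ a. The statistic I ↦ #{j : (i,j) ∈ max(I)} can be written as b/(a+b) plus an ℝ-linear combination of the signed toggleability statistics T_p; hence its average along any rowmotion orbit is b/(a+b). -/

import Mathlib

open scoped Classical
open Finset

variable {P : Type*} [Fintype P] [PartialOrder P]

/-- `I` is an order ideal (downward-closed subset) of the finite poset `P`. -/
def IsIdeal (I : Finset P) : Prop := ∀ ⦃x y : P⦄, x ≤ y → y ∈ I → x ∈ I

/-- `p` is a minimal element of the complement `P \ I`. -/
def CanTogIn (I : Finset P) (p : P) : Prop := p ∉ I ∧ ∀ q, q < p → q ∈ I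

/-- `p` is a maximal element of `I`. -/
def CanTogOut (I : Finset P) (p : P) : Prop := p ∈ I ∧ ∀ q, p < q → q ∉ I

/-- Rowmotion: the order ideal generated by the minimal elements of `P \ I`. -/
noncomputable def rowmotion (I : Finset P) : Finset P :=
  univ.filter fun x => ∃ y, CanTogIn I y ∧ x ≤ y

/-- Toggleability statistic `T⁺_p`. -/
noncomputable def Tin (p : P) (I : Finset P) : ℝ := if CanTogIn I p then 1 else 0

/-- Toggleability statistic `T⁻_p`. -/
noncomputable def Tout (p : P) (I : Finset P) : ℝ := if CanTogOut I p then 1 else 0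

/-- Signed toggleability statistic `T_p = T⁺_p - T⁻_p`. -/
noncomputable def Tsgn (p : P) (I : Finset P) : ℝ := Tin p I - Tout p I

-- general poset lemmas
lemma rowmotion_isIdeal (I : Finset P) : IsIdeal (rowmotion I) := by
  intro x y hxy hy
  simp only [rowmotion, mem_filter, mem_univ, true_and] at *
  obtain ⟨z, hz, hyz⟩ := hy
  exact ⟨z, hz, hxy.trans hyz⟩

lemma canTogIn_iff_canTogOut_rowmotion (I : Finset P) (p : P) :
    CanTogIn I p ↔ CanTogOut (rowmotion I) p := by
  constructor
  · rintro hp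
    refine ⟨by simp only [rowmotion, mem_filter, mem_univ, true_and]; exact ⟨p, hp, le_rfl⟩, ?_⟩
    intro q hq hqmem
    simp only [rowmotion, mem_filter, mem_univ, true_and] at hqmem
    obtain ⟨z, hz, hqz⟩ := hqmem
    exact hp.1 (hz.2 p (lt_of_lt_of_le hq hqz))
  · rintro ⟨hmem, hmax⟩
    simp only [rowmotion, mem_filter, mem_univ, true_and] at hmem
    obtain ⟨z, hz, hpz⟩ := hmem
    rcases eq_or_lt_of_le hpz with rfl | hlt
    · exact hz
    · refine absurd ?_ (hmax z hlt)
      simp only [rowmotion, mem_filter, mem_univ, true_and]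
      exact ⟨z, hz, le_rfl⟩

lemma Tin_eq_Tout_rowmotion (I : Finset P) (p : P) :
    Tin p I = Tout p (rowmotion I) := by
  simp only [Tin, Tout, canTogIn_iff_canTogOut_rowmotion]

lemma sum_Tsgn_orbit (I : Finset P) (p : P) (N : ℕ) (h : rowmotion^[N] I = I) :
    ∑ k ∈ Finset.range N, Tsgn p (rowmotion^[k] I) = 0 := by
  have key : ∀ k, Tsgn p (rowmotion^[k] I)
      = Tout p (rowmotion^[k+1] I) - Tout p (rowmotion^[k] I) := by
    intro k
    rw [Function.iterate_succ_apply', Tsgn, Tin_eq_Tout_rowmotion]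
  simp_rw [key]
  rw [Finset.sum_range_sub (fun k => Tout p (rowmotion^[k] I)), h]
  simp

lemma isIdeal_iterate (I : Finset P) (hI : IsIdeal I) (k : ℕ) :
    IsIdeal (rowmotion^[k] I) := by
  cases k with
  | zero => exact hI
  | succ n => rw [Function.iterate_succ_apply']; exact rowmotion_isIdeal _

-- rectangle machinery
noncomputable def rcnt (a b : ℕ) (I : Finset (Fin a × Fin b)) (x : ℕ) : ℕ :=
  ((univ : Finset (Fin b)).filter fun j => ∃ h : x < a, ((⟨x, h⟩ : Fin a), j) ∈ I).card

section Rect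

variable {a b : ℕ} {I : Finset (Fin a × Fin b)}

lemma fin_downclosed_mem_iff {n : ℕ} {S : Finset (Fin n)}
    (h : ∀ ⦃j j' : Fin n⦄, j' ≤ j → j ∈ S → j' ∈ S) (j : Fin n) :
    j ∈ S ↔ (j : ℕ) < S.card := by
  constructor
  · intro hj
    have hsub : Finset.Iic j ⊆ S := fun j' hj' => h (Finset.mem_Iic.mp hj') hj
    have := Finset.card_le_card hsub
    rw [Fin.card_Iic] at this
    omega
  · intro hj
    by_contra hjS
    have hsub : S ⊆ Finset.Iio j := by
      intro j'' hj''
      rw [Finset.mem_Iio]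
      by_contra hle
      exact hjS (h (le_of_not_gt hle) hj'')
    have := Finset.card_le_card hsub
    rw [Fin.card_Iio] at this
    omega

lemma rcnt_le (x : ℕ) : rcnt a b I x ≤ b := by
  simpa [rcnt] using Finset.card_le_card (Finset.filter_subset _ (univ : Finset (Fin b)))

lemma rcnt_of_ge {x : ℕ} (h : a ≤ x) : rcnt a b I x = 0 := by
  rw [rcnt, Finset.card_eq_zero]
  ext j
  simp only [mem_filter, mem_univ, true_and, Finset.notMem_empty, iff_false]
  rintro ⟨hx, -⟩
  omega

lemma mem_iff_rcnt (hI : IsIdeal I) (x : Fin a) (j : Fin b) :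
    (x, j) ∈ I ↔ (j : ℕ) < rcnt a b I x := by
  have hdc : ∀ ⦃j j' : Fin b⦄, j' ≤ j →
      j ∈ (univ.filter fun j => ∃ h : (x : ℕ) < a, ((⟨x, h⟩ : Fin a), j) ∈ I) →
      j' ∈ (univ.filter fun j => ∃ h : (x : ℕ) < a, ((⟨x, h⟩ : Fin a), j) ∈ I) := by
    intro j j' hle hj
    simp only [mem_filter, mem_univ, true_and] at hj ⊢
    obtain ⟨hx, hmem⟩ := hj
    exact ⟨hx, hI (Prod.mk_le_mk.mpr ⟨le_rfl, hle⟩) hmem⟩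
  have := fin_downclosed_mem_iff hdc j
  rw [rcnt]
  rw [← this]
  simp only [mem_filter, mem_univ, true_and]
  constructor
  · intro hm; exact ⟨x.2, by simpa using hm⟩
  · rintro ⟨h, hm⟩; simpa using hm

lemma rcnt_antitone (hI : IsIdeal I) {x y : ℕ} (h : x ≤ y) :
    rcnt a b I y ≤ rcnt a b I x := by
  apply Finset.card_le_card
  intro j hj
  simp only [mem_filter, mem_univ, true_and] at hj ⊢
  obtain ⟨hy, hmem⟩ := hj
  have hx : x < a := lt_of_le_of_lt h hy
  refine ⟨hx, hI (Prod.mk_le_mk.mpr ⟨?_, le_rfl⟩) hmem⟩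
  exact Fin.mk_le_mk.mpr h

lemma canTogIn_iff (hI : IsIdeal I) (x : Fin a) (j : Fin b) :
    CanTogIn I (x, j) ↔ (j : ℕ) = rcnt a b I x ∧
      ((x : ℕ) = 0 ∨ rcnt a b I x < rcnt a b I ((x : ℕ) - 1)) := by
  constructor
  · rintro ⟨hnot, hall⟩
    rw [mem_iff_rcnt hI] at hnot
    push_neg at hnot
    have hje : (j : ℕ) = rcnt a b I x := by
      rcases Nat.eq_zero_or_pos (j : ℕ) with h0 | h0
      · omega
      · have hj' := hall (x, (⟨(j : ℕ) - 1, by omega⟩ : Fin b))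
          (by rw [Prod.mk_lt_mk]; right; exact ⟨le_rfl, by rw [Fin.mk_lt_mk]; omega⟩)
        rw [mem_iff_rcnt hI] at hj'
        simp only at hj'
        omega
    refine ⟨hje, ?_⟩
    rcases Nat.eq_zero_or_pos (x : ℕ) with h0 | h0
    · exact Or.inl h0
    · right
      have hx1 : (x : ℕ) - 1 < a := by omega
      have := hall ((⟨(x : ℕ) - 1, hx1⟩ : Fin a), j)
        (by rw [Prod.mk_lt_mk]; left; exact ⟨by rw [Fin.mk_lt_mk]; omega, le_rfl⟩)
      rw [mem_iff_rcnt hI] at this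
      simp only at this
      omega
  · rintro ⟨hje, hcond⟩
    constructor
    · rw [mem_iff_rcnt hI]; omega
    · rintro ⟨u, v⟩ hlt
      rw [mem_iff_rcnt hI]
      rw [Prod.mk_lt_mk] at hlt
      have hux : (u : ℕ) ≤ (x : ℕ) := by
        rcases hlt with ⟨h1, _⟩ | ⟨h1, _⟩
        · exact (Fin.lt_iff_val_lt_val.mp h1).le
        · exact Fin.le_def.mp h1
      rcases hlt with ⟨h1, h2⟩ | ⟨h1, h2⟩
      · -- u < x, v ≤ j
        have hx0 : (x : ℕ) ≠ 0 := by have := Fin.lt_iff_val_lt_val.mp h1; omega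
        have hr : rcnt a b I x < rcnt a b I ((x : ℕ) - 1) := hcond.resolve_left hx0
        have hmono : rcnt a b I ((x : ℕ) - 1) ≤ rcnt a b I u := by
          apply rcnt_antitone hI
          have := Fin.lt_iff_val_lt_val.mp h1; omega
        have hv : (v : ℕ) ≤ (j : ℕ) := Fin.le_def.mp h2
        omega
      · -- u ≤ x, v < j
        have hv : (v : ℕ) < (j : ℕ) := Fin.lt_iff_val_lt_val.mp h2
        have hmono : rcnt a b I x ≤ rcnt a b I u := rcnt_antitone hI hux
        omega

lemma canTogOut_iff (hI : IsIdeal I) (x : Fin a) (j : Fin b) :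
    CanTogOut I (x, j) ↔ (j : ℕ) + 1 = rcnt a b I x ∧
      rcnt a b I ((x : ℕ) + 1) < rcnt a b I x := by
  constructor
  · rintro ⟨hmem, hall⟩
    rw [mem_iff_rcnt hI] at hmem
    have hje : (j : ℕ) + 1 = rcnt a b I x := by
      rcases Nat.lt_or_ge ((j : ℕ) + 1) b with hb' | hb'
      · have := hall (x, ⟨(j : ℕ) + 1, hb'⟩)
          (by rw [Prod.mk_lt_mk]; right; exact ⟨le_rfl, by rw [Fin.mk_lt_mk]; omega⟩)
        rw [mem_iff_rcnt hI] at this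
        simp only [not_lt] at this
        omega
      · have := rcnt_le (a := a) (I := I) (x : ℕ)
        omega
    refine ⟨hje, ?_⟩
    rcases Nat.lt_or_ge ((x : ℕ) + 1) a with ha' | ha'
    · have := hall ((⟨(x : ℕ) + 1, ha'⟩ : Fin a), j)
        (by rw [Prod.mk_lt_mk]; left; exact ⟨by rw [Fin.mk_lt_mk]; omega, le_rfl⟩)
      rw [mem_iff_rcnt hI] at this
      simp only [not_lt] at this
      omega
    · rw [rcnt_of_ge ha']; omega
  · rintro ⟨hje, hcond⟩
    constructor
    · rw [mem_iff_rcnt hI]; omega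
    · rintro ⟨u, v⟩ hlt
      rw [mem_iff_rcnt hI]
      rw [Prod.mk_lt_mk] at hlt
      simp only [not_lt]
      rcases hlt with ⟨h1, h2⟩ | ⟨h1, h2⟩
      · -- x < u, j ≤ v
        have hu : (x : ℕ) + 1 ≤ (u : ℕ) := Fin.lt_iff_val_lt_val.mp h1
        have hmono : rcnt a b I u ≤ rcnt a b I ((x : ℕ) + 1) := rcnt_antitone hI hu
        have hv : (j : ℕ) ≤ (v : ℕ) := Fin.le_def.mp h2
        omega
      · -- x ≤ u, j < v
        have hu : (x : ℕ) ≤ (u : ℕ) := Fin.le_def.mp h1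
        have hmono : rcnt a b I u ≤ rcnt a b I x := rcnt_antitone hI hu
        have hv : (j : ℕ) < (v : ℕ) := Fin.lt_iff_val_lt_val.mp h2
        omega

end Rect

noncomputable def prevr (a b : ℕ) (I : Finset (Fin a × Fin b)) : ℕ → ℕ
  | 0 => b
  | (x + 1) => rcnt a b I x

noncomputable def dd (a b : ℕ) (I : Finset (Fin a × Fin b)) (x : ℕ) : ℝ :=
  if rcnt a b I x < prevr a b I x then 1 else 0

noncomputable def ccoef (a b : ℕ) (i : Fin a) (x y : ℕ) : ℝ :=
  ((y : ℝ) + a - x) / ((a : ℝ) + b) - (if x ≤ (i : ℕ) then 1 else 0)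

noncomputable def GG (a b : ℕ) (I : Finset (Fin a × Fin b)) (i : Fin a) (x : ℕ) : ℝ :=
  (((rcnt a b I x : ℝ) + a - x) * dd a b I x - rcnt a b I x) / ((a : ℝ) + b)
    - (if x ≤ (i : ℕ) then dd a b I x else dd a b I ((i : ℕ) + 1))

section Rect2

variable {a b : ℕ} {I : Finset (Fin a × Fin b)}

@[simp] lemma prevr_succ (x : ℕ) : prevr a b I (x + 1) = rcnt a b I x := rfl

@[simp] lemma prevr_zero : prevr a b I 0 = b := rfl

lemma prevr_le (x : ℕ) : prevr a b I x ≤ b := by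
  cases x with
  | zero => exact le_rfl
  | succ x' => exact rcnt_le x'

lemma canTogIn_iff' (hI : IsIdeal I) (x : Fin a) (y : Fin b) :
    CanTogIn I (x, y) ↔
      (y : ℕ) = rcnt a b I x ∧ rcnt a b I (x : ℕ) < prevr a b I (x : ℕ) := by
  rw [canTogIn_iff hI]
  cases hx : (x : ℕ) with
  | zero =>
    simp only [prevr]
    constructor
    · rintro ⟨h1, -⟩
      exact ⟨h1, by rw [← h1]; exact y.2⟩
    · rintro ⟨h1, h2⟩
      exact ⟨h1, by simp⟩
  | succ x' =>
    simp only [prevr]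
    constructor
    · rintro ⟨h1, h2⟩
      refine ⟨h1, ?_⟩
      rcases h2 with h2 | h2
      · omega
      · simpa using h2
    · rintro ⟨h1, h2⟩
      exact ⟨h1, Or.inr (by simpa using h2)⟩

lemma canTogOut_iff' (hI : IsIdeal I) (x : Fin a) (y : Fin b) :
    CanTogOut I (x, y) ↔
      (y : ℕ) + 1 = rcnt a b I x ∧
        rcnt a b I ((x : ℕ) + 1) < prevr a b I ((x : ℕ) + 1) := by
  rw [canTogOut_iff hI, prevr_succ]

lemma rowsum (hI : IsIdeal I) (i : Fin a) (x : Fin a) :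
    ∑ y : Fin b, ccoef a b i (x : ℕ) (y : ℕ) * Tsgn (x, y) I
      = dd a b I (x : ℕ) * ccoef a b i (x : ℕ) (rcnt a b I (x : ℕ))
        - dd a b I ((x : ℕ) + 1) * ccoef a b i (x : ℕ) (rcnt a b I (x : ℕ) - 1) := by
  have hsplit : ∀ y : Fin b, ccoef a b i (x : ℕ) (y : ℕ) * Tsgn (x, y) I
      = ccoef a b i (x : ℕ) (y : ℕ) * Tin (x, y) I
        - ccoef a b i (x : ℕ) (y : ℕ) * Tout (x, y) I := by
    intro y; rw [Tsgn]; ring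
  rw [Finset.sum_congr rfl fun y _ => hsplit y, Finset.sum_sub_distrib]
  have hTin : ∑ y : Fin b, ccoef a b i (x : ℕ) (y : ℕ) * Tin (x, y) I
      = dd a b I (x : ℕ) * ccoef a b i (x : ℕ) (rcnt a b I (x : ℕ)) := by
    by_cases hc : rcnt a b I (x : ℕ) < prevr a b I (x : ℕ)
    · have hρb : rcnt a b I (x : ℕ) < b := lt_of_lt_of_le hc (prevr_le _)
      rw [Finset.sum_eq_single (⟨rcnt a b I (x : ℕ), hρb⟩ : Fin b)]
      · have : CanTogIn I (x, (⟨rcnt a b I (x : ℕ), hρb⟩ : Fin b)) := by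
          rw [canTogIn_iff' hI]; exact ⟨rfl, hc⟩
        simp [Tin, this, dd, hc]
      · intro y _ hy
        have : ¬ CanTogIn I (x, y) := by
          rw [canTogIn_iff' hI]
          rintro ⟨h1, -⟩
          exact hy (Fin.ext h1)
        simp [Tin, this]
      · intro h; exact absurd (Finset.mem_univ _) h
    · have : ∀ y : Fin b, ¬ CanTogIn I (x, y) := by
        intro y
        rw [canTogIn_iff' hI]
        rintro ⟨-, h2⟩
        exact hc h2
      simp [Tin, this, dd, hc]
  have hTout : ∑ y : Fin b, ccoef a b i (x : ℕ) (y : ℕ) * Tout (x, y) I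
      = dd a b I ((x : ℕ) + 1) * ccoef a b i (x : ℕ) (rcnt a b I (x : ℕ) - 1) := by
    by_cases hc : rcnt a b I ((x : ℕ) + 1) < rcnt a b I (x : ℕ)
    · have h1 : 1 ≤ rcnt a b I (x : ℕ) := by omega
      have hρb : rcnt a b I (x : ℕ) - 1 < b := by
        have := rcnt_le (a := a) (I := I) (x : ℕ); omega
      rw [Finset.sum_eq_single (⟨rcnt a b I (x : ℕ) - 1, hρb⟩ : Fin b)]
      · have : CanTogOut I (x, (⟨rcnt a b I (x : ℕ) - 1, hρb⟩ : Fin b)) := by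
          rw [canTogOut_iff' hI, prevr_succ]
          exact ⟨by simp; omega, hc⟩
        simp [Tout, this, dd, hc]
      · intro y _ hy
        have : ¬ CanTogOut I (x, y) := by
          rw [canTogOut_iff' hI]
          rintro ⟨hy1, -⟩
          exact hy (Fin.ext (by simp; omega))
        simp [Tout, this]
      · intro h; exact absurd (Finset.mem_univ _) h
    · have : ∀ y : Fin b, ¬ CanTogOut I (x, y) := by
        intro y
        rw [canTogOut_iff' hI, prevr_succ]
        rintro ⟨-, h2⟩
        exact hc h2
      simp [Tout, this, dd, hc]
  rw [hTin, hTout]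

end Rect2

section Rect3

variable {a b : ℕ} {I : Finset (Fin a × Fin b)}

lemma tele (ha : 0 < a) (hb : 0 < b) (i : Fin a) (hI : IsIdeal I)
    (x : ℕ) (hx : x < a) :
    dd a b I x * ccoef a b i x (rcnt a b I x)
      - dd a b I (x + 1) * ccoef a b i x (rcnt a b I x - 1)
    = GG a b I i x - GG a b I i (x + 1) := by
  have hab : (a : ℝ) + b ≠ 0 := by positivity
  have hanti : rcnt a b I (x + 1) ≤ rcnt a b I x := rcnt_antitone hI (Nat.le_succ x)
  have hd2 : dd a b I (x + 1)
      = if rcnt a b I (x + 1) < rcnt a b I x then (1 : ℝ) else 0 := by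
    rw [dd, prevr_succ]
  simp only [GG, ccoef, hd2]
  by_cases h2 : rcnt a b I (x + 1) < rcnt a b I x
  · simp only [if_pos h2]
    have h1 : 1 ≤ rcnt a b I x := by omega
    have hcast : ((rcnt a b I x - 1 : ℕ) : ℝ) = (rcnt a b I x : ℝ) - 1 := by
      rw [Nat.cast_sub h1]; simp
    rw [hcast]
    by_cases hxi : x ≤ (i : ℕ)
    · by_cases hxi1 : x + 1 ≤ (i : ℕ)
      · simp only [if_pos hxi, if_pos hxi1]
        push_cast
        field_simp
        ring
      · have hxe : x = (i : ℕ) := by omega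
        have hdd : dd a b I ((i : ℕ) + 1) = 1 := by
          rw [← hxe, hd2, if_pos h2]
        simp only [if_pos hxi, if_neg hxi1, hdd]
        push_cast
        field_simp
        ring
    · have hxi1 : ¬ (x + 1 ≤ (i : ℕ)) := by omega
      simp only [if_neg hxi, if_neg hxi1]
      push_cast
      field_simp
      ring
  · simp only [if_neg h2]
    have heq : rcnt a b I (x + 1) = rcnt a b I x := le_antisymm hanti (by omega)
    rw [heq]
    by_cases hxi : x ≤ (i : ℕ)
    · by_cases hxi1 : x + 1 ≤ (i : ℕ)
      · simp only [if_pos hxi, if_pos hxi1]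
        push_cast
        field_simp
        ring
      · have hxe : x = (i : ℕ) := by omega
        have hdd : dd a b I ((i : ℕ) + 1) = 0 := by
          rw [← hxe, hd2, if_neg h2]
        simp only [if_pos hxi, if_neg hxi1, hdd]
        push_cast
        field_simp
        ring
    · have hxi1 : ¬ (x + 1 ≤ (i : ℕ)) := by omega
      simp only [if_neg hxi, if_neg hxi1]
      push_cast
      field_simp
      ring

end Rect3

section Rect4

variable {a b : ℕ} {I : Finset (Fin a × Fin b)}

lemma card_stat (hI : IsIdeal I) (i : Fin a) :
    ((univ.filter fun j : Fin b => CanTogOut I (i, j)).card : ℝ)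
      = dd a b I ((i : ℕ) + 1) := by
  rw [dd, prevr_succ]
  by_cases hc : rcnt a b I ((i : ℕ) + 1) < rcnt a b I (i : ℕ)
  · rw [if_pos hc]
    have h1 : 1 ≤ rcnt a b I (i : ℕ) := by omega
    have hρb : rcnt a b I (i : ℕ) - 1 < b := by
      have := rcnt_le (a := a) (I := I) ((i : ℕ)); omega
    have hset : (univ.filter fun j : Fin b => CanTogOut I (i, j))
        = {(⟨rcnt a b I (i : ℕ) - 1, hρb⟩ : Fin b)} := by
      ext j
      simp only [mem_filter, mem_univ, true_and, mem_singleton,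
        canTogOut_iff' hI, prevr_succ]
      constructor
      · rintro ⟨hj, -⟩
        exact Fin.ext (by simp; omega)
      · rintro rfl
        exact ⟨by simp; omega, hc⟩
    rw [hset, Finset.card_singleton]
    norm_num
  · rw [if_neg hc]
    have hset : (univ.filter fun j : Fin b => CanTogOut I (i, j)) = ∅ := by
      ext j
      simp only [mem_filter, mem_univ, true_and, Finset.notMem_empty, iff_false]
      rw [canTogOut_iff' hI, prevr_succ]
      rintro ⟨-, h2⟩
      exact hc h2
    rw [hset]
    simp

lemma part1 (ha : 0 < a) (hb : 0 < b) (i : Fin a) (hI : IsIdeal I) :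
    ((univ.filter fun j : Fin b => CanTogOut I (i, j)).card : ℝ)
      = (b : ℝ) / ((a : ℝ) + b)
        + ∑ p : Fin a × Fin b, ccoef a b i (p.1 : ℕ) (p.2 : ℕ) * Tsgn p I := by
  have hab : (a : ℝ) + b ≠ 0 := by positivity
  rw [card_stat hI i]
  have hsum : ∑ p : Fin a × Fin b, ccoef a b i (p.1 : ℕ) (p.2 : ℕ) * Tsgn p I
      = ∑ x : Fin a, (dd a b I (x : ℕ) * ccoef a b i (x : ℕ) (rcnt a b I (x : ℕ))
          - dd a b I ((x : ℕ) + 1) * ccoef a b i (x : ℕ) (rcnt a b I (x : ℕ) - 1)) := by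
    rw [Fintype.sum_prod_type]
    exact Finset.sum_congr rfl fun x _ => rowsum hI i x
  rw [hsum]
  have htele : ∑ x : Fin a, (dd a b I (x : ℕ) * ccoef a b i (x : ℕ) (rcnt a b I (x : ℕ))
        - dd a b I ((x : ℕ) + 1) * ccoef a b i (x : ℕ) (rcnt a b I (x : ℕ) - 1))
      = GG a b I i 0 - GG a b I i a := by
    rw [Fin.sum_univ_eq_sum_range (fun x => dd a b I x * ccoef a b i x (rcnt a b I x)
        - dd a b I (x + 1) * ccoef a b i x (rcnt a b I x - 1)) a]
    rw [← Finset.sum_range_sub' (fun x => GG a b I i x) a]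
    exact Finset.sum_congr rfl fun x hxr => tele ha hb i hI x (Finset.mem_range.mp hxr)
  rw [htele]
  have hGa : GG a b I i a = - dd a b I ((i : ℕ) + 1) := by
    rw [GG, rcnt_of_ge le_rfl, if_neg (by omega : ¬ (a ≤ (i : ℕ)))]
    push_cast
    ring
  have hd0 : dd a b I 0 = if rcnt a b I 0 < b then (1 : ℝ) else 0 := by
    rw [dd, prevr_zero]
  rw [GG, if_pos (Nat.zero_le _), hGa, hd0]
  by_cases hρ : rcnt a b I 0 < b
  · rw [if_pos hρ]
    push_cast
    field_simp
    ring
  · have hρb : rcnt a b I 0 = b := le_antisymm (rcnt_le 0) (by omega)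
    rw [if_neg hρ, hρb]
    push_cast
    field_simp
    ring

end Rect4

/-- On the rectangle `[a]×[b]`, for a fixed row `i`, the statistic
`I ↦ #{j : (i,j) ∈ max(I)}` is `b/(a+b)` plus a linear combination of signed
toggleability statistics; hence its average along every rowmotion orbit is `b/(a+b)`. -/
theorem rect_fiber_antichain_card_homomesy (a b : ℕ) (ha : 0 < a) (hb : 0 < b) (i : Fin a) :
    ∃ c : Fin a × Fin b → ℝ,
      (∀ I : Finset (Fin a × Fin b), IsIdeal I →
        ((univ.filter fun j : Fin b => CanTogOut I (i, j)).card : ℝ)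
          = (b : ℝ) / ((a : ℝ) + b) + ∑ p : Fin a × Fin b, c p * Tsgn p I) ∧
      (∀ I : Finset (Fin a × Fin b), IsIdeal I → ∀ N : ℕ, 0 < N → rowmotion^[N] I = I →
        ∑ k ∈ Finset.range N,
            ((univ.filter fun j : Fin b => CanTogOut (rowmotion^[k] I) (i, j)).card : ℝ)
          = N * ((b : ℝ) / ((a : ℝ) + b))) := by
  refine ⟨fun p => ccoef a b i (p.1 : ℕ) (p.2 : ℕ), fun I hI => part1 ha hb i hI, ?_⟩
  intro I hI N hN hper
  have h1 : ∀ k, ((univ.filter fun j : Fin b => CanTogOut (rowmotion^[k] I) (i, j)).card : ℝ)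
      = (b : ℝ) / ((a : ℝ) + b)
        + ∑ p : Fin a × Fin b, ccoef a b i (p.1 : ℕ) (p.2 : ℕ) * Tsgn p (rowmotion^[k] I) :=
    fun k => part1 ha hb i (isIdeal_iterate I hI k)
  calc ∑ k ∈ Finset.range N,
        ((univ.filter fun j : Fin b => CanTogOut (rowmotion^[k] I) (i, j)).card : ℝ)
      = ∑ k ∈ Finset.range N, ((b : ℝ) / ((a : ℝ) + b)
          + ∑ p : Fin a × Fin b, ccoef a b i (p.1 : ℕ) (p.2 : ℕ) * Tsgn p (rowmotion^[k] I)) :=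
        Finset.sum_congr rfl fun k _ => h1 k
    _ = N * ((b : ℝ) / ((a : ℝ) + b))
          + ∑ k ∈ Finset.range N, ∑ p : Fin a × Fin b,
              ccoef a b i (p.1 : ℕ) (p.2 : ℕ) * Tsgn p (rowmotion^[k] I) := by
        rw [Finset.sum_add_distrib, Finset.sum_const, Finset.card_range, nsmul_eq_mul]
    _ = N * ((b : ℝ) / ((a : ℝ) + b)) := by
        rw [Finset.sum_comm]
        have h2 : ∀ p : Fin a × Fin b,
            ∑ k ∈ Finset.range N,
              ccoef a b i (p.1 : ℕ) (p.2 : ℕ) * Tsgn p (rowmotion^[k] I) = 0 := by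
          intro p
          rw [← Finset.mul_sum, sum_Tsgn_orbit I p N hper, mul_zero]
        rw [Finset.sum_congr rfl fun p _ => h2 p, Finset.sum_const_zero, add_zero]
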